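/- Let L > 0 and let ψ : ℝ → ℝ be a C², L-periodic function with ψ(x) > 0 for all x, satisfying ψ''(x) − ψ(x) + ψ(x)² = 0 for all x ∈ ℝ. Suppose f : ℝ → ℝ is a C², L-periodic function, not identically zero, and λ ∈ ℝ satisfies −f''(x) + f(x) − ψ(x) f(x) = λ f(x) for all x. Then λ ≥ 0; moreover, if λ = 0 then f is a scalar multiple of ψ. (That is, the operator L₂ = −d²/dx² + 1 − ψ on L-periodic functions has no negative eigenvalues, and zero is a simple eigenvalue with eigenfunction ψ.) -/

import Mathlib

open intervalIntegral Set

/-- The derivative of a periodic function is periodic. -/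
lemma periodic_deriv_aux (f : ℝ → ℝ) (L : ℝ) (h : Function.Periodic f L) :
    Function.Periodic (deriv f) L := by
  intro x
  have e : (fun y => f (y + L)) = f := funext h
  rw [← deriv_comp_add_const f L x, e]

/-- A continuous nonnegative periodic function with zero integral over a period vanishes. -/
lemma zero_of_integral_zero (L : ℝ) (hL : 0 < L) (F : ℝ → ℝ) (hF : Continuous F)
    (hnn : ∀ x, 0 ≤ F x) (hFper : Function.Periodic F L)
    (hzero : ∫ x in (0:ℝ)..L, F x = 0) : ∀ x, F x = 0 := by
  intro x₀
  by_contra hne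
  have hpos0 : 0 < F x₀ := lt_of_le_of_ne (hnn x₀) (Ne.symm hne)
  -- reduce to a point in [0, L)
  set n : ℤ := ⌊x₀ / L⌋ with hn
  set y : ℝ := x₀ - n * L with hy
  have hy0 : 0 ≤ y := by
    have := Int.sub_floor_div_mul_nonneg x₀ hL
    simpa [hy, hn] using this
  have hyL : y < L := by
    have := Int.sub_floor_div_mul_lt x₀ hL
    simpa [hy, hn] using this
  have hFy : F y = F x₀ := by
    simpa [hy] using hFper.sub_int_mul_eq (x := x₀) n
  have hposy : 0 < F y := hFy ▸ hpos0
  -- continuity: F > F y / 2 near y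
  obtain ⟨δ, hδ, hball⟩ := Metric.continuousAt_iff.mp hF.continuousAt (F y / 2) (by linarith)
  set b : ℝ := min L (y + δ) with hb
  have hyb : y < b := lt_min hyL (by linarith)
  have hbL : b ≤ L := min_le_left _ _
  have hmid : 0 < ∫ x in y..b, F x := by
    apply intervalIntegral_pos_of_pos_on (hF.intervalIntegrable _ _) _ hyb
    intro x hx
    have hd : dist x y < δ := by
      rw [Real.dist_eq, abs_of_pos (by linarith [hx.1])]
      have : x < y + δ := lt_of_lt_of_le hx.2 (min_le_right _ _)
      linarith
    have := hball hd
    rw [Real.dist_eq] at this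
    have := abs_lt.mp this
    linarith [this.1]
  have h1 : (0:ℝ) ≤ ∫ x in (0:ℝ)..y, F x :=
    intervalIntegral.integral_nonneg hy0 (fun u _ => hnn u)
  have h3 : (0:ℝ) ≤ ∫ x in b..L, F x :=
    intervalIntegral.integral_nonneg hbL (fun u _ => hnn u)
  have hsplit : (∫ x in (0:ℝ)..y, F x) + (∫ x in y..b, F x) + (∫ x in b..L, F x)
      = ∫ x in (0:ℝ)..L, F x := by
    rw [integral_add_adjacent_intervals (hF.intervalIntegrable _ _) (hF.intervalIntegrable _ _),
      integral_add_adjacent_intervals (hF.intervalIntegrable _ _) (hF.intervalIntegrable _ _)]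
  rw [hzero] at hsplit
  linarith

/-- The operator `L₂ = −d²/dx² + 1 − ψ` on `L`-periodic functions has no negative
eigenvalues, and `0` is a simple eigenvalue with eigenfunction `ψ`. -/
theorem stmt_13 (L : ℝ) (hL : 0 < L) (ψ : ℝ → ℝ)
    (hψ : ContDiff ℝ 2 ψ) (hper : Function.Periodic ψ L) (hpos : ∀ x, 0 < ψ x)
    (hode : ∀ x, deriv (deriv ψ) x - ψ x + ψ x ^ 2 = 0)
    (f : ℝ → ℝ) (lam : ℝ)
    (hf : ContDiff ℝ 2 f) (hfper : Function.Periodic f L) (hfne : f ≠ 0)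
    (heig : ∀ x, -deriv (deriv f) x + f x - ψ x * f x = lam * f x) :
    0 ≤ lam ∧ (lam = 0 → ∃ c : ℝ, ∀ x, f x = c * ψ x) := by
  have hψd : Differentiable ℝ ψ := hψ.differentiable (by norm_num)
  have hfd : Differentiable ℝ f := hf.differentiable (by norm_num)
  have hψ'd : Differentiable ℝ (deriv ψ) :=
    ((contDiff_succ_iff_deriv (n := 1) |>.mp (show ContDiff ℝ ((1 : WithTop ℕ∞) + 1) ψ by rw [one_add_one_eq_two]; exact hψ)).2.2).differentiable (by norm_num)
  have hf'd : Differentiable ℝ (deriv f) :=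
    ((contDiff_succ_iff_deriv (n := 1) |>.mp (show ContDiff ℝ ((1 : WithTop ℕ∞) + 1) f by rw [one_add_one_eq_two]; exact hf)).2.2).differentiable (by norm_num)
  have hψ1 : ∀ x, HasDerivAt ψ (deriv ψ x) x := fun x => (hψd x).hasDerivAt
  have hf1 : ∀ x, HasDerivAt f (deriv f x) x := fun x => (hfd x).hasDerivAt
  have hψ2 : ∀ x, HasDerivAt (deriv ψ) (deriv (deriv ψ) x) x := fun x => (hψ'd x).hasDerivAt
  have hf2 : ∀ x, HasDerivAt (deriv f) (deriv (deriv f) x) x := fun x => (hf'd x).hasDerivAt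
  have hψne : ∀ x, ψ x ≠ 0 := fun x => (hpos x).ne'
  set W : ℝ → ℝ := fun x => ψ x * deriv f x - deriv ψ x * f x with hWdef
  set g : ℝ → ℝ := fun x => f x / ψ x with hgdef
  have hW : ∀ x, HasDerivAt W (-lam * (ψ x * f x)) x := by
    intro x
    have h := ((hψ1 x).mul (hf2 x)).sub ((hψ2 x).mul (hf1 x))
    refine h.congr_deriv ?_
    linear_combination (-1 : ℝ) * (ψ x * heig x + f x * hode x)
  have hg : ∀ x, HasDerivAt g (W x / ψ x ^ 2) x := by
    intro x
    have h := (hf1 x).div (hψ1 x) (hψne x)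
    refine h.congr_deriv ?_
    rw [hWdef]
    ring_nf
  have hh : ∀ x, HasDerivAt (fun x => W x * g x) (-lam * f x ^ 2 + W x ^ 2 / ψ x ^ 2) x := by
    intro x
    have h := (hW x).mul (hg x)
    refine h.congr_deriv ?_
    rw [hgdef]
    field_simp [hψne x]
  -- continuity facts
  have hWc : Continuous W := ((hψ.continuous.mul (hf.continuous_deriv (by norm_num)))).sub
      ((hψ.continuous_deriv (by norm_num)).mul hf.continuous)
  have hGc : Continuous (fun x => W x ^ 2 / ψ x ^ 2) :=
    (hWc.pow 2).div (hψ.continuous.pow 2) (fun x => pow_ne_zero 2 (hψne x))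
  have hF2c : Continuous (fun x => f x ^ 2) := hf.continuous.pow 2
  have hintc : Continuous (fun x => -lam * f x ^ 2 + W x ^ 2 / ψ x ^ 2) :=
    (continuous_const.mul hF2c).add hGc
  -- periodicity facts
  have hWper : Function.Periodic W L := by
    intro x
    simp only [hWdef, hper x, hfper x, periodic_deriv_aux f L hfper x,
      periodic_deriv_aux ψ L hper x]
  have hgper : Function.Periodic g L := by
    intro x
    simp only [hgdef, hper x, hfper x]
  -- the integral identity
  have hkey : ∫ x in (0:ℝ)..L, (-lam * f x ^ 2 + W x ^ 2 / ψ x ^ 2) = 0 := by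
    rw [intervalIntegral.integral_eq_sub_of_hasDerivAt (fun x _ => hh x)
      (hintc.intervalIntegrable 0 L)]
    have : W L * g L = W 0 * g 0 := by
      have h1 : W L = W 0 := by simpa using hWper 0
      have h2 : g L = g 0 := by simpa using hgper 0
      rw [h1, h2]
    simpa using sub_eq_zero.mpr this
  have hsplit : (∫ x in (0:ℝ)..L, W x ^ 2 / ψ x ^ 2)
      = lam * ∫ x in (0:ℝ)..L, f x ^ 2 := by
    have h1 : ∫ x in (0:ℝ)..L, (-lam * f x ^ 2 + W x ^ 2 / ψ x ^ 2)
        = (∫ x in (0:ℝ)..L, -lam * f x ^ 2) + ∫ x in (0:ℝ)..L, W x ^ 2 / ψ x ^ 2 :=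
      intervalIntegral.integral_add ((continuous_const.mul hF2c).intervalIntegrable _ _)
        (hGc.intervalIntegrable _ _)
    have h2 : ∫ x in (0:ℝ)..L, -lam * f x ^ 2 = -lam * ∫ x in (0:ℝ)..L, f x ^ 2 :=
      intervalIntegral.integral_const_mul _ _
    rw [h1, h2] at hkey
    linarith
  -- positivity of ∫ f²
  have hA : 0 < ∫ x in (0:ℝ)..L, f x ^ 2 := by
    rcases lt_or_eq_of_le (intervalIntegral.integral_nonneg hL.le
      (fun u _ => sq_nonneg (f u))) with h | h
    · exact h
    · exfalso
      apply hfne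
      funext x
      have := zero_of_integral_zero L hL (fun x => f x ^ 2) hF2c (fun x => sq_nonneg _)
        (fun x => by simp [hfper x]) h.symm x
      have := pow_eq_zero_iff (n := 2) (by norm_num) |>.mp this
      simpa using this
  have hB : 0 ≤ ∫ x in (0:ℝ)..L, W x ^ 2 / ψ x ^ 2 :=
    intervalIntegral.integral_nonneg hL.le
      (fun u _ => div_nonneg (sq_nonneg _) (sq_nonneg _))
  constructor
  · nlinarith
  · intro hlam
    rw [hlam, zero_mul] at hsplit
    -- W ≡ 0
    have hW0 : ∀ x, W x = 0 := by
      intro x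
      have := zero_of_integral_zero L hL (fun x => W x ^ 2 / ψ x ^ 2) hGc
        (fun x => div_nonneg (sq_nonneg _) (sq_nonneg _))
        (fun x => by simp [hWper x, hper x]) hsplit x
      have hnum : W x ^ 2 = 0 := by
        rwa [div_eq_zero_iff, or_iff_left (pow_ne_zero 2 (hψne x))] at this
      exact pow_eq_zero_iff (n := 2) (by norm_num) |>.mp hnum
    -- g is constant
    have hgd : Differentiable ℝ g := fun x => (hg x).differentiableAt
    have hg0 : ∀ x, deriv g x = 0 := by
      intro x
      rw [(hg x).deriv, hW0 x]
      simp
    refine ⟨g 0, fun x => ?_⟩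
    have hc : g x = g 0 := is_const_of_deriv_eq_zero hgd hg0 x 0
    calc f x = g x * ψ x := by rw [hgdef, div_mul_cancel₀ _ (hψne x)]
      _ = g 0 * ψ x := by rw [hc]
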